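/- For every r ≥ 1, the polynomial s_r(x|y) = Σ_{j=0}^{min(r,n)} (−1)^j p_{r−j}(x) σ_j(y) (the formal supercharacter of the super-symmetric power S^r(E)) has a unique lowest exponent with respect to the dominance order: setting κ_r = (0,…,0 | 0,…,0, 1,…,1 (r ones)) ∈ ℕ^{m+n} if r ≤ n and κ_r = (0,…,0, r−n | 1,…,1) if r > n, the coefficient of the monomial with exponent vector κ_r in s_r equals (−1)^{min(r,n)} (in particular it is nonzero), and every exponent vector λ ∈ ℕ^{m+n} of a monomial occurring with nonzero coefficient in s_r satisfies λ ≥ κ_r, with λ > κ_r whenever λ ≠ κ_r. -/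

import Mathlib

/-- Partial sum of the first `k` coordinates of `μ ∈ ℤ^{m+n}`. -/
def psum (m n : ℕ) (μ : Fin (m + n) → ℤ) (k : ℕ) : ℤ :=
  ∑ i : Fin (m + n), if (i : ℕ) < k then μ i else 0

/-- Dominance order on `ℤ^{m+n}`: `μ ≤ λ` iff all proper initial partial sums of `μ` are
at most those of `λ`, and the total sums agree. -/
def domLE (m n : ℕ) (μ lam : Fin (m + n) → ℤ) : Prop :=
  (∀ k : ℕ, 1 ≤ k → k < m + n → psum m n μ k ≤ psum m n lam k) ∧
    psum m n μ (m + n) = psum m n lam (m + n)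

/-- Strict dominance order. -/
def domLT (m n : ℕ) (μ lam : Fin (m + n) → ℤ) : Prop :=
  domLE m n μ lam ∧ μ ≠ lam

/-- Membership in `X(T)^+`: the first `m` coordinates are weakly decreasing, and the last `n`
coordinates are weakly decreasing. -/
def IsDominant (m n : ℕ) (lam : Fin (m + n) → ℤ) : Prop :=
  (∀ i j : Fin (m + n), (i : ℕ) ≤ (j : ℕ) → (j : ℕ) < m → lam j ≤ lam i) ∧
    (∀ i j : Fin (m + n), m ≤ (i : ℕ) → (i : ℕ) ≤ (j : ℕ) → lam j ≤ lam i)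

/-- Convert the exponent vector of a monomial in `x₁,…,x_m,y₁,…,y_n` into an element of
`ℤ^{m+n}`, the first `m` coordinates being the `x`-exponents, the last `n` the
`y`-exponents. -/
def expVec (m n : ℕ) (d : (Fin m ⊕ Fin n) →₀ ℕ) : Fin (m + n) → ℤ :=
  fun k =>
    if h : (k : ℕ) < m then (d (Sum.inl ⟨(k : ℕ), h⟩) : ℤ)
    else (d (Sum.inr ⟨(k : ℕ) - m, by have := k.isLt; omega⟩) : ℤ)

/-- The polynomial `s_r(x|y) = Σ_{j=0}^{min(r,n)} (−1)^j p_{r−j}(x) σ_j(y)` (the formal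
supercharacter of the super-symmetric power `S^r(E)`), where `σ_j` is the `j`-th
elementary symmetric polynomial and `p_i` the `i`-th complete homogeneous symmetric
polynomial. -/
noncomputable def sPoly (K : Type*) [CommRing K] (m n : ℕ) (r : ℕ) :
    MvPolynomial (Fin m ⊕ Fin n) K :=
  ∑ j ∈ Finset.range (min r n + 1),
    (-1 : MvPolynomial (Fin m ⊕ Fin n) K) ^ j *
      (MvPolynomial.rename Sum.inl (MvPolynomial.hsymm (Fin m) K (r - j)) *
        MvPolynomial.rename Sum.inr (MvPolynomial.esymm (Fin n) K j))

/-- The exponent vector `κ_r`: equal to `(0^m | 0^{n−r}, 1^r)` if `r ≤ n`, and to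
`(0^{m−1}, r−n | 1^n)` if `r > n`. -/
noncomputable def kappaExp (m n r : ℕ) : (Fin m ⊕ Fin n) →₀ ℕ :=
  Finsupp.equivFunOnFinite.symm (fun i : Fin m ⊕ Fin n =>
    match i with
    | Sum.inl a => if r ≤ n then 0 else (if (a : ℕ) = m - 1 then r - n else 0)
    | Sum.inr b => if r ≤ n then (if n - r ≤ (b : ℕ) then 1 else 0) else 1)

/-!
Coefficientwise, `s_r = ∑ (-1)^{|b|} x^a y^b`, the sum running over the monomials of total degree
`r` whose `y`-part `b` is squarefree: the `j`-th summand of `s_r` contributes exactly those with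
`|b| = j`. So the support of `s_r` consists of the vectors of total `r` whose last `n` entries are
at most `1`, and `κ_r` is one of them. At every cut `k`, either `κ_r` vanishes before `k`, and
then its `k`-th partial sum is `0`; or `k ≥ m` and `κ_r` is `1` from `k` on, so that its tail
after `k` dominates that of any vector of the support, and equal totals give the inequality of
partial sums.
-/

namespace Finsupp

theorem degree_eq_card_toMultiset {σ : Type*} (d : σ →₀ ℕ) :
    d.degree = Multiset.card (toMultiset d) := by
  rw [card_toMultiset]; rfl

theorem degree_le_card_of_le_one {σ : Type*} [Fintype σ] {d : σ →₀ ℕ} (h : ∀ i, d i ≤ 1) :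
    d.degree ≤ Fintype.card σ := by
  rw [degree_eq_sum, Fintype.card_eq_sum_ones]
  exact Finset.sum_le_sum fun i _ => h i

theorem degree_sumElim {α β : Type*} (a : α →₀ ℕ) (b : β →₀ ℕ) :
    (sumElim a b).degree = a.degree + b.degree :=
  sum_sumElim a b fun _ k => k

theorem sumElim_eq_sumElim_iff {α β γ : Type*} [Zero γ] {a a' : α →₀ γ} {b b' : β →₀ γ} :
    sumElim a b = sumElim a' b' ↔ a = a' ∧ b = b' := by
  simpa using sumFinsuppEquivProdFinsupp.symm.apply_eq_iff_eq (x := (a, b)) (y := (a', b'))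

end Finsupp

namespace MvPolynomial

open Finset

variable {R : Type*} [CommSemiring R] {σ τ : Type*}

theorem prod_map_X [DecidableEq σ] (s : Multiset σ) :
    (s.map (X : σ → MvPolynomial σ R)).prod = monomial (Multiset.toFinsupp s) 1 := by
  induction s using Multiset.induction_on with
  | empty => simp
  | cons a t ih =>
    rw [Multiset.map_cons, Multiset.prod_cons, ih, ← Multiset.singleton_add, map_add,
      Multiset.toFinsupp_singleton, monomial_single_add, pow_one]

theorem coeff_sumElim_rename_inl_mul_rename_inr (p : MvPolynomial σ R) (q : MvPolynomial τ R)
    (a : σ →₀ ℕ) (b : τ →₀ ℕ) :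
    coeff (Finsupp.sumElim a b) (rename Sum.inl p * rename Sum.inr q) = coeff a p * coeff b q := by
  classical
  induction p using MvPolynomial.induction_on' with
  | add p₁ p₂ h₁ h₂ => rw [map_add, add_mul, coeff_add, h₁, h₂, coeff_add, add_mul]
  | monomial u c =>
    induction q using MvPolynomial.induction_on' with
    | add q₁ q₂ h₁ h₂ => rw [map_add, mul_add, coeff_add, h₁, h₂, coeff_add, mul_add]
    | monomial v c' =>
      simp only [rename_monomial, monomial_mul, coeff_monomial, ← Finsupp.sumElim_eq_add,
        Finsupp.sumElim_eq_sumElim_iff]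
      split_ifs <;> simp_all

variable [Fintype σ] [DecidableEq σ]

theorem coeff_hsymm (n : ℕ) (d : σ →₀ ℕ) :
    coeff d (hsymm σ R n) = if d.degree = n then 1 else 0 := by
  simp_rw [hsymm, prod_map_X, coeff_sum, coeff_monomial, Multiset.toFinsupp_eq_iff]
  split_ifs with h
  · rw [Fintype.sum_eq_single ⟨Finsupp.toMultiset d, by rw [← h, Finsupp.degree_eq_card_toMultiset]⟩]
    · exact if_pos rfl
    · exact fun s hs => if_neg fun h' => hs (Subtype.ext h')
  · refine Finset.sum_eq_zero fun s _ => if_neg fun h' => h ?_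
    rw [Finsupp.degree_eq_card_toMultiset, ← h', s.2]

theorem coeff_esymm (n : ℕ) (d : σ →₀ ℕ) :
    coeff d (esymm σ R n) = if (∀ i, d i ≤ 1) ∧ d.degree = n then 1 else 0 := by
  simp_rw [esymm, Finset.prod_eq_multiset_prod, prod_map_X, coeff_sum, coeff_monomial,
    Multiset.toFinsupp_eq_iff]
  split_ifs with h
  · obtain ⟨hle, hdeg⟩ := h
    have hnodup : (Finsupp.toMultiset d).Nodup :=
      Multiset.nodup_iff_count_le_one.mpr fun i => by simpa using hle i
    rw [Finset.sum_eq_single_of_mem ⟨_, hnodup⟩]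
    · exact if_pos rfl
    · rw [mem_powersetCard_univ, ← hdeg, Finsupp.degree_eq_card_toMultiset]; rfl
    · exact fun t _ ht => if_neg fun h' => ht (Finset.val_inj.mp h')
  · refine Finset.sum_eq_zero fun t ht => if_neg fun h' => h ⟨fun i => ?_, ?_⟩
    · simpa [h'] using Multiset.nodup_iff_count_le_one.mp t.nodup i
    · rw [Finsupp.degree_eq_card_toMultiset, ← h', Finset.card_val, mem_powersetCard_univ.mp ht]

end MvPolynomial

open MvPolynomial in
theorem coeff_sPoly (K : Type*) [CommRing K] (m n r : ℕ) (d : Fin m ⊕ Fin n →₀ ℕ) :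
    coeff d (sPoly K m n r) =
      if d.degree = r ∧ ∀ b, d (Sum.inr b) ≤ 1 then (-1) ^ (∑ b, d (Sum.inr b)) else 0 := by
  obtain ⟨⟨a, b⟩, rfl⟩ := Finsupp.sumFinsuppEquivProdFinsupp.symm.surjective d
  have hsign : ∀ j, (-1 : MvPolynomial (Fin m ⊕ Fin n) K) ^ j = C ((-1) ^ j) := by simp
  simp only [Finsupp.sumFinsuppEquivProdFinsupp_symm_apply, sPoly, coeff_sum, hsign, coeff_C_mul,
    coeff_sumElim_rename_inl_mul_rename_inr, coeff_hsymm, coeff_esymm, Finsupp.sumElim_inr]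
  rw [Finsupp.degree_sumElim, ← Finsupp.degree_eq_sum]
  by_cases hb : ∀ y, b y ≤ 1
  · have hbn := Finsupp.degree_le_card_of_le_one hb
    rw [Fintype.card_fin] at hbn
    simp only [hb, implies_true, true_and, and_true, mul_ite, mul_one, mul_zero,
      Finset.sum_ite_eq, Finset.mem_range]
    split_ifs <;> first | rfl | omega
  · simp [hb]

theorem coeff_sPoly_ne_zero_iff (K : Type*) [CommRing K] [Nontrivial K] (m n r : ℕ)
    (d : Fin m ⊕ Fin n →₀ ℕ) :
    MvPolynomial.coeff d (sPoly K m n r) ≠ 0 ↔ d.degree = r ∧ ∀ b, d (Sum.inr b) ≤ 1 := by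
  rw [coeff_sPoly]
  split_ifs with h <;> simp [h, neg_one_pow_ne_zero]

section KappaExp

variable {m n r : ℕ}

@[simp]
theorem kappaExp_inl (a : Fin m) :
    kappaExp m n r (Sum.inl a) = if r ≤ n then 0 else if (a : ℕ) = m - 1 then r - n else 0 := by
  simp [kappaExp]

@[simp]
theorem kappaExp_inr (b : Fin n) :
    kappaExp m n r (Sum.inr b) = if r ≤ n then if n - r ≤ (b : ℕ) then 1 else 0 else 1 := by
  simp [kappaExp]

theorem kappaExp_inr_le_one (b : Fin n) : kappaExp m n r (Sum.inr b) ≤ 1 := by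
  rw [kappaExp_inr]; split_ifs <;> omega

theorem sum_kappaExp_inl (hm : 1 ≤ m) : ∑ a : Fin m, kappaExp m n r (Sum.inl a) = r - n := by
  simp only [kappaExp_inl]
  split_ifs with h
  · rw [Finset.sum_const_zero]; omega
  · rw [Fin.sum_univ_eq_sum_range (fun i => if i = m - 1 then r - n else 0), Finset.sum_ite_eq',
      if_pos (Finset.mem_range.mpr (by omega))]

theorem sum_kappaExp_inr : ∑ b : Fin n, kappaExp m n r (Sum.inr b) = min r n := by
  simp only [kappaExp_inr]
  split_ifs with h
  · rw [Fin.sum_univ_eq_sum_range (fun i => if n - r ≤ i then 1 else 0), Finset.sum_boole,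
      Finset.range_eq_Ico, Finset.Ico_filter_le, Nat.card_Ico, zero_max, Nat.cast_id]
    omega
  · rw [Finset.sum_const, Finset.card_univ, Fintype.card_fin, smul_eq_mul, mul_one]; omega

theorem degree_kappaExp (hm : 1 ≤ m) : (kappaExp m n r).degree = r := by
  rw [Finsupp.degree_eq_sum, Fintype.sum_sum_type, sum_kappaExp_inl hm, sum_kappaExp_inr]
  omega

theorem coeff_kappaExp_sPoly (K : Type*) [CommRing K] (hm : 1 ≤ m) :
    MvPolynomial.coeff (kappaExp m n r) (sPoly K m n r) = (-1) ^ min r n := by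
  rw [coeff_sPoly, if_pos ⟨degree_kappaExp hm, kappaExp_inr_le_one⟩, sum_kappaExp_inr]

theorem expVec_kappaExp_head_or_tail (k : ℕ) :
    (∀ i : Fin (m + n), (i : ℕ) < k → expVec m n (kappaExp m n r) i = 0) ∨
      (m ≤ k ∧ ∀ i : Fin (m + n), k ≤ (i : ℕ) → expVec m n (kappaExp m n r) i = 1) := by
  by_cases h : if r ≤ n then k ≤ m + n - r else k < m
  · left
    intro i hi
    simp only [expVec, kappaExp_inl, kappaExp_inr]
    split_ifs at h ⊢ <;> first | rfl | omega
  · right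
    refine ⟨by split_ifs at h <;> omega, fun i hi => ?_⟩
    simp only [expVec, kappaExp_inl, kappaExp_inr]
    split_ifs at h ⊢ <;> first | rfl | omega

end KappaExp

section ExpVec

variable {m n : ℕ}

theorem expVec_castAdd (d : Fin m ⊕ Fin n →₀ ℕ) (a : Fin m) :
    expVec m n d (Fin.castAdd n a) = d (Sum.inl a) := by
  simp [expVec]

theorem expVec_natAdd (d : Fin m ⊕ Fin n →₀ ℕ) (b : Fin n) :
    expVec m n d (Fin.natAdd m b) = d (Sum.inr b) := by
  simp [expVec]

theorem sum_expVec (d : Fin m ⊕ Fin n →₀ ℕ) : ∑ i, expVec m n d i = d.degree := by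
  simp [Fin.sum_univ_add, expVec_castAdd, expVec_natAdd, Finsupp.degree_eq_sum,
    Fintype.sum_sum_type]

theorem expVec_nonneg (d : Fin m ⊕ Fin n →₀ ℕ) (i : Fin (m + n)) : 0 ≤ expVec m n d i := by
  unfold expVec; split_ifs <;> positivity

theorem expVec_le_one {d : Fin m ⊕ Fin n →₀ ℕ} (hd : ∀ b, d (Sum.inr b) ≤ 1) {i : Fin (m + n)}
    (hi : m ≤ (i : ℕ)) : expVec m n d i ≤ 1 := by
  rw [expVec, dif_neg (by omega)]
  exact_mod_cast hd _

end ExpVec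

section Dominance

variable {m n k : ℕ} {v w : Fin (m + n) → ℤ}

theorem psum_eq_sum (v : Fin (m + n) → ℤ) : psum m n v (m + n) = ∑ i, v i :=
  Finset.sum_congr rfl fun i _ => if_pos i.isLt

theorem psum_add_sum_ite_le (v : Fin (m + n) → ℤ) (k : ℕ) :
    psum m n v k + ∑ i : Fin (m + n), (if (i : ℕ) < k then 0 else v i) = ∑ i, v i := by
  rw [psum, ← Finset.sum_add_distrib]
  exact Finset.sum_congr rfl fun i _ => by split_ifs <;> simp

theorem psum_le_psum_of_head (h : ∀ i : Fin (m + n), (i : ℕ) < k → v i ≤ w i) :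
    psum m n v k ≤ psum m n w k :=
  Finset.sum_le_sum fun i _ => by split_ifs with hi; exacts [h i hi, le_rfl]

theorem psum_le_psum_of_tail (hvw : ∑ i, v i = ∑ i, w i)
    (h : ∀ i : Fin (m + n), k ≤ (i : ℕ) → w i ≤ v i) : psum m n v k ≤ psum m n w k := by
  have htail : ∑ i : Fin (m + n), (if (i : ℕ) < k then 0 else w i) ≤
      ∑ i : Fin (m + n), (if (i : ℕ) < k then 0 else v i) :=
    Finset.sum_le_sum fun i _ => by split_ifs with hi; exacts [le_rfl, h i (by omega)]
  linarith [psum_add_sum_ite_le v k, psum_add_sum_ite_le w k]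

theorem domLE_expVec_kappaExp {r : ℕ} (hm : 1 ≤ m) {d : Fin m ⊕ Fin n →₀ ℕ} (hdeg : d.degree = r)
    (hd : ∀ b, d (Sum.inr b) ≤ 1) : domLE m n (expVec m n (kappaExp m n r)) (expVec m n d) := by
  have htot : ∑ i, expVec m n (kappaExp m n r) i = ∑ i, expVec m n d i := by
    rw [sum_expVec, sum_expVec, degree_kappaExp hm, hdeg]
  refine ⟨fun k _ _ => ?_, by rw [psum_eq_sum, psum_eq_sum, htot]⟩
  rcases expVec_kappaExp_head_or_tail (r := r) k with hhead | ⟨hmk, htail⟩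
  · exact psum_le_psum_of_head fun i hi => (hhead i hi).trans_le (expVec_nonneg d i)
  · exact psum_le_psum_of_tail htot fun i hi => (htail i hi).symm ▸ expVec_le_one hd (hmk.trans hi)

end Dominance

theorem sPoly_lowest_general (K : Type*) [Field K] (m n : ℕ) (hm : 1 ≤ m)
    (r : ℕ) :
    MvPolynomial.coeff (kappaExp m n r) (sPoly K m n r) = (-1 : K) ^ (min r n) ∧
      ∀ d : (Fin m ⊕ Fin n) →₀ ℕ, MvPolynomial.coeff d (sPoly K m n r) ≠ 0 →
        domLE m n (expVec m n (kappaExp m n r)) (expVec m n d) ∧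
          (expVec m n d ≠ expVec m n (kappaExp m n r) →
            domLT m n (expVec m n (kappaExp m n r)) (expVec m n d)) := by
  refine ⟨coeff_kappaExp_sPoly K hm, fun d hd => ?_⟩
  obtain ⟨hdeg, hd₁⟩ := (coeff_sPoly_ne_zero_iff K m n r d).mp hd
  have hle := domLE_expVec_kappaExp hm hdeg hd₁
  exact ⟨hle, fun hne => ⟨hle, hne.symm⟩⟩

/-- For `r ≥ 1`, the polynomial `s_r` has a unique lowest exponent `κ_r` for the
dominance order: the coefficient of the monomial with exponent `κ_r` is
`(−1)^{min(r,n)}` (in particular nonzero), and every exponent vector of a monomial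
occurring with nonzero coefficient in `s_r` is `≥ κ_r`, strictly so when different
from `κ_r`. -/
theorem sPoly_lowest (K : Type*) [Field K] (m n : ℕ) (hm : 1 ≤ m) (hn : 1 ≤ n)
    (r : ℕ) (hr : 1 ≤ r) :
    MvPolynomial.coeff (kappaExp m n r) (sPoly K m n r) = (-1 : K) ^ (min r n) ∧
      ∀ d : (Fin m ⊕ Fin n) →₀ ℕ, MvPolynomial.coeff d (sPoly K m n r) ≠ 0 →
        domLE m n (expVec m n (kappaExp m n r)) (expVec m n d) ∧
          (expVec m n d ≠ expVec m n (kappaExp m n r) →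
            domLT m n (expVec m n (kappaExp m n r)) (expVec m n d)) :=
  sPoly_lowest_general K m n hm r
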